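/- Let A be a skew left brace and X ⊆ A a subset such that b·λ_a(x)·b⁻¹ ∈ X for all x ∈ X and all a,b ∈ A. Then the map r_A(a,b) = (λ_a(b), λ⁻¹_{λ_a(b)}((a∘b)⁻¹·a·(a∘b))) maps X × X into X × X, and its restriction r_A|_{X×X} : X × X → X × X is a bijective non-degenerate solution of the Yang–Baxter equation. -/

import Mathlib

/-- A skew left brace structure on a group `(A, ·)`: a second group structure
`(a, b) ↦ circ a b` (with identity `circOne` and inverse `circInv`) satisfying
`a ∘ (b · c) = (a ∘ b) · a⁻¹ · (a ∘ c)`. -/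
structure SkewLeftBrace (A : Type*) [Group A] where
  circ : A → A → A
  circ_assoc : ∀ a b c : A, circ (circ a b) c = circ a (circ b c)
  circOne : A
  circOne_circ : ∀ a : A, circ circOne a = a
  circ_circOne : ∀ a : A, circ a circOne = a
  circInv : A → A
  circInv_circ : ∀ a : A, circ (circInv a) a = circOne
  circ_circInv : ∀ a : A, circ a (circInv a) = circOne
  circ_mul : ∀ a b c : A, circ a (b * c) = circ a b * a⁻¹ * circ a c

namespace SkewLeftBrace

variable {A : Type*} [Group A]

/-- The map `λ_a : b ↦ a⁻¹ · (a ∘ b)`. -/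
def lam (S : SkewLeftBrace A) (a b : A) : A := a⁻¹ * S.circ a b

/-- The inverse `λ⁻¹_a` of the bijective map `λ_a`. -/
noncomputable def lamInv (S : SkewLeftBrace A) (a : A) : A → A :=
  Function.invFun (S.lam a)

/-- The canonical solution `r_A (a, b) = (λ_a b, λ⁻¹_{λ_a b} ((a ∘ b)⁻¹ · a · (a ∘ b)))`
associated with a skew left brace. -/
noncomputable def rmap (S : SkewLeftBrace A) : A × A → A × A :=
  fun p => (S.lam p.1 p.2,
    S.lamInv (S.lam p.1 p.2) ((S.circ p.1 p.2)⁻¹ * p.1 * S.circ p.1 p.2))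

end SkewLeftBrace

/-!
Write `r_A(a, b) = (λ_a b, τ_b a)` with `τ_b a = (λ_a b)' ∘ (a ∘ b)`, where `'` is the inverse
in `(A, ∘)`, so that `a ∘ b = λ_a(b) ∘ τ_b(a)`. Since `λ : (A, ∘) → Aut (A, ·)` is a
homomorphism, the two sides of the braid relation have the same first component, the same
`∘`-product of the first two components (`λ_x (y ∘ z)`) and the same `∘`-product of all three
(`x ∘ y ∘ z`); cancelling in `(A, ∘)` gives the other two components. As
`τ_b a = λ_{(λ_a b)'}((a ∘ b)⁻¹ a (a ∘ b))`, the closure hypothesis keeps `X × X` invariant,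
and `r_A`, `λ_a`, `τ_b` are injective on `A` with explicit preimages of points of `X` lying in `X`.
-/

theorem Function.bijective_of_semiconj {α β : Type*} {e : α → β} {F : α → α} {f : β → β}
    (he : Injective e) (hF : Semiconj e F f) (hf : Injective f) (hs : ∀ x, ∃ y, f (e y) = e x) :
    Bijective F := by
  refine ⟨fun x y hxy => he (hf ?_), fun x => ?_⟩
  · rw [← hF x, ← hF y, hxy]
  · obtain ⟨y, hy⟩ := hs x
    exact ⟨y, he (by rw [hF y, hy])⟩

namespace SkewLeftBrace

variable {A : Type*} [Group A] (S : SkewLeftBrace A)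

theorem circ_one (a : A) : S.circ a 1 = a := by
  have h := S.circ_mul a 1 1
  rw [one_mul] at h
  exact mul_inv_eq_one.mp (by simpa using h.symm)

theorem circOne_eq_one : S.circOne = 1 := by
  simpa [circ_one] using S.circOne_circ 1

theorem one_circ (a : A) : S.circ 1 a = a := by
  simpa [circOne_eq_one] using S.circOne_circ a

theorem circ_eq_mul_lam (a b : A) : S.circ a b = a * S.lam a b := by
  rw [lam, mul_inv_cancel_left]

theorem lam_mul (a b c : A) : S.lam a (b * c) = S.lam a b * S.lam a c := by
  simp only [lam, S.circ_mul]
  group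

def lamHom (a : A) : A →* A := MonoidHom.mk' (S.lam a) (S.lam_mul a)

theorem lam_inv (a b : A) : S.lam a b⁻¹ = (S.lam a b)⁻¹ := map_inv (S.lamHom a) b

theorem lam_one (b : A) : S.lam 1 b = b := by
  rw [lam, one_circ, inv_one, one_mul]

theorem lam_circ (a b c : A) : S.lam (S.circ a b) c = S.lam a (S.lam b c) := by
  have hbc : S.lam b c = b⁻¹ * S.circ b c := rfl
  rw [hbc, lam_mul, lam_inv]
  simp only [lam, S.circ_assoc]
  group

theorem circInv_circ_cancel (a b : A) : S.circ (S.circInv a) (S.circ a b) = b := by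
  rw [← S.circ_assoc, S.circInv_circ, S.circOne_circ]

theorem circ_circInv_cancel (a b : A) : S.circ a (S.circ (S.circInv a) b) = b := by
  rw [← S.circ_assoc, S.circ_circInv, S.circOne_circ]

theorem circ_right_injective (a : A) : Function.Injective (S.circ a) :=
  Function.LeftInverse.injective (S.circInv_circ_cancel a)

theorem circInv_circInv (a : A) : S.circInv (S.circInv a) = a := by
  simpa [S.circInv_circ, S.circ_circOne] using S.circInv_circ_cancel (S.circInv a) a

theorem lam_self_circInv (a : A) : S.lam a (S.circInv a) = a⁻¹ := by
  rw [lam, S.circ_circInv, circOne_eq_one, mul_one]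

theorem lam_circInv_self (a : A) : S.lam (S.circInv a) a = (S.circInv a)⁻¹ := by
  rw [lam, S.circInv_circ, circOne_eq_one, mul_one]

theorem lam_circInv_lam (a b : A) : S.lam (S.circInv a) (S.lam a b) = b := by
  rw [← lam_circ, S.circInv_circ, circOne_eq_one, lam_one]

theorem lam_lam_circInv (a b : A) : S.lam a (S.lam (S.circInv a) b) = b := by
  rw [← lam_circ, S.circ_circInv, circOne_eq_one, lam_one]

theorem lamInv_eq (a : A) : S.lamInv a = S.lam (S.circInv a) :=
  Function.invFun_eq_of_injective_of_rightInverse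
    (Function.LeftInverse.injective (S.lam_circInv_lam a))
    (S.lam_lam_circInv a)

/-- `τ_b(a)`, the second component of `r_A(a, b)`; it is the unique solution of
`a ∘ b = λ_a(b) ∘ τ_b(a)`. -/
def tau (b a : A) : A := S.circ (S.circInv (S.lam a b)) (S.circ a b)

theorem circ_lam_tau (a b : A) : S.circ (S.lam a b) (S.tau b a) = S.circ a b :=
  S.circ_circInv_cancel _ _

theorem lam_lam_tau (a b : A) :
    S.lam (S.lam a b) (S.tau b a) = (S.circ a b)⁻¹ * a * S.circ a b := by
  rw [lam, circ_lam_tau, lam]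
  group

theorem tau_eq_lam_conj (a b : A) :
    S.tau b a = S.lam (S.circInv (S.lam a b)) ((S.circ a b)⁻¹ * a * S.circ a b) := by
  rw [← lam_lam_tau, lam_circInv_lam]

theorem rmap_eq (a b : A) : S.rmap (a, b) = (S.lam a b, S.tau b a) := by
  rw [rmap, lamInv_eq, ← tau_eq_lam_conj]

theorem lam_tau_circInv (a b : A) : S.lam (S.tau b a) (S.circInv b) = S.circInv (S.lam a b) := by
  rw [tau, lam_circ, lam_circ, lam_self_circInv, lam_inv, lam_inv, lam_circInv_self, inv_inv]

theorem lam_circ_right (a b c : A) :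
    S.lam a (S.circ b c) = S.circ (S.lam a b) (S.lam (S.tau b a) c) := by
  rw [circ_eq_mul_lam _ (S.lam a b), ← lam_circ, circ_lam_tau, lam_circ, ← lam_mul,
    ← circ_eq_mul_lam]

theorem circ_lam_circ_tau_tau (a b c : A) :
    S.circ (S.lam a (S.circ b c)) (S.tau c (S.tau b a)) = S.circ (S.circ a b) c := by
  rw [lam_circ_right, S.circ_assoc, circ_lam_tau, ← S.circ_assoc, circ_lam_tau]

theorem ybe_fst (x y z : A) :
    S.lam (S.lam x y) (S.lam (S.tau y x) z) = S.lam x (S.lam y z) := by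
  rw [← lam_circ, circ_lam_tau, lam_circ]

theorem ybe_snd (x y z : A) :
    S.tau (S.lam (S.tau y x) z) (S.lam x y) = S.lam (S.tau (S.lam y z) x) (S.tau z y) := by
  apply S.circ_right_injective (S.lam x (S.lam y z))
  conv_lhs => rw [← ybe_fst, circ_lam_tau, ← lam_circ_right]
  rw [← lam_circ_right, circ_lam_tau]

theorem ybe_thd (x y z : A) :
    S.tau z (S.tau y x) = S.tau (S.tau z y) (S.tau (S.lam y z) x) := by
  apply S.circ_right_injective (S.lam x (S.circ y z))
  rw [circ_lam_circ_tau_tau, ← circ_lam_tau _ y z, circ_lam_circ_tau_tau, S.circ_assoc,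
    S.circ_assoc, circ_lam_tau]

theorem rmap_injective : Function.Injective S.rmap := by
  rintro ⟨a, b⟩ ⟨c, d⟩ h
  rw [rmap_eq, rmap_eq, Prod.mk.injEq] at h
  obtain ⟨hlam, htau⟩ := h
  have hcirc : S.circ a b = S.circ c d := by rw [← circ_lam_tau, hlam, htau, circ_lam_tau]
  have hac : a = c := by
    have h := S.lam_lam_tau a b
    rw [hlam, htau, lam_lam_tau, hcirc] at h
    simpa using h.symm
  subst hac
  rw [S.circ_right_injective a hcirc]

theorem tau_injective (b : A) : Function.Injective (S.tau b) := by
  intro a c h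
  have hlam : S.lam a b = S.lam c b := by
    simpa only [lam_tau_circInv, circInv_circInv] using
      congrArg (fun t => S.circInv (S.lam t (S.circInv b))) h
  have hcirc : S.circ a b = S.circ c b := by rw [← circ_lam_tau, hlam, h, circ_lam_tau]
  simpa only [S.circ_assoc, S.circ_circInv, S.circ_circOne] using
    congrArg (S.circ · (S.circInv b)) hcirc

def IsLamConjClosed (X : Set A) : Prop := ∀ x ∈ X, ∀ a b : A, b * S.lam a x * b⁻¹ ∈ X

namespace IsLamConjClosed

variable {S} {X : Set A}

theorem lam_mem (hX : S.IsLamConjClosed X) {x : A} (hx : x ∈ X) (a : A) : S.lam a x ∈ X := by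
  simpa using hX x hx a 1

theorem tau_mem (hX : S.IsLamConjClosed X) {a : A} (ha : a ∈ X) (b : A) : S.tau b a ∈ X := by
  rw [tau_eq_lam_conj, lam_mul, lam_mul, lam_inv]
  simpa using hX a ha _ (S.lam (S.circInv (S.lam a b)) (S.circ a b))⁻¹

theorem exists_rmap_eq (hX : S.IsLamConjClosed X) {u v : A} (hu : u ∈ X) (hv : v ∈ X) :
    ∃ a ∈ X, ∃ b ∈ X, S.rmap (a, b) = (u, v) := by
  set a := S.circ u v * S.lam u v * (S.circ u v)⁻¹ with ha
  have hlam : S.lam a (S.lam (S.circInv a) u) = u := S.lam_lam_circInv a u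
  have hcirc : S.circ a (S.lam (S.circInv a) u) = S.circ u v := by
    rw [circ_eq_mul_lam, hlam, ha, circ_eq_mul_lam S u v]
    group
  refine ⟨a, hX v hv u _, _, hX.lam_mem hu (S.circInv a), ?_⟩
  rw [rmap_eq, tau, hlam, hcirc, circInv_circ_cancel]

theorem exists_tau_eq (hX : S.IsLamConjClosed X) (b : A) {v : A} (hv : v ∈ X) :
    ∃ a ∈ X, S.tau b a = v := by
  -- `λ_{τ_b a}(b') = (λ_a b)'` forces `λ_a b = w`, hence `a = w ∘ v ∘ b'`.
  set w := S.circInv (S.lam v (S.circInv b))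
  have hvw : S.lam v (S.circInv b) = S.circInv w := (S.circInv_circInv _).symm
  have hconj : S.circ (S.circ w v) (S.circInv b) = w * S.lam w v * w⁻¹ := by
    rw [circ_eq_mul_lam _ (S.circ w v), lam_circ, hvw, lam_self_circInv, circ_eq_mul_lam _ w v]
  have hlam : S.lam (S.circ (S.circ w v) (S.circInv b)) b = w := by
    rw [lam_circ, lam_circ, lam_circInv_self, lam_inv, hvw, lam_inv, lam_self_circInv, inv_inv]
  have hcirc : S.circ (S.circ (S.circ w v) (S.circInv b)) b = S.circ w v := by
    rw [S.circ_assoc, S.circInv_circ, S.circ_circOne]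
  refine ⟨_, hconj ▸ hX v hv w w, ?_⟩
  rw [tau, hlam, hcirc, circInv_circ_cancel]

end IsLamConjClosed

end SkewLeftBrace

/-- If `X ⊆ A` satisfies `b · λ_a (x) · b⁻¹ ∈ X` for all `x ∈ X` and `a, b ∈ A`, then
`r_A` maps `X × X` into itself and the restriction `r_A|_{X × X}` is a bijective
non-degenerate solution of the Yang–Baxter (braid) equation. -/
theorem skewLeftBrace_rmap_restriction {A : Type*} [Group A] (S : SkewLeftBrace A)
    (X : Set A) (hX : ∀ x ∈ X, ∀ a b : A, b * S.lam a x * b⁻¹ ∈ X) :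
    (∀ x ∈ X, ∀ y ∈ X, (S.rmap (x, y)).1 ∈ X ∧ (S.rmap (x, y)).2 ∈ X) ∧
    ∀ r' : X × X → X × X,
      (∀ p : X × X,
        ((r' p).1 : A) = (S.rmap ((p.1 : A), (p.2 : A))).1 ∧
        ((r' p).2 : A) = (S.rmap ((p.1 : A), (p.2 : A))).2) →
      Function.Bijective r' ∧
      ((fun p : X × X × X => ((r' (p.1, p.2.1)).1, (r' (p.1, p.2.1)).2, p.2.2)) ∘
          (fun p : X × X × X => (p.1, r' p.2)) ∘
          (fun p : X × X × X => ((r' (p.1, p.2.1)).1, (r' (p.1, p.2.1)).2, p.2.2))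
        = (fun p : X × X × X => (p.1, r' p.2)) ∘
          (fun p : X × X × X => ((r' (p.1, p.2.1)).1, (r' (p.1, p.2.1)).2, p.2.2)) ∘
          (fun p : X × X × X => (p.1, r' p.2))) ∧
      (∀ a : X, Function.Bijective (fun b : X => (r' (a, b)).1)) ∧
      (∀ b : X, Function.Bijective (fun a : X => (r' (a, b)).2)) := by
  have hX : S.IsLamConjClosed X := hX
  refine ⟨fun x hx y hy => ?_, fun r' hr' => ?_⟩
  · rw [S.rmap_eq]
    exact ⟨hX.lam_mem hy x, hX.tau_mem hx y⟩
  have hσ : ∀ p : X × X, ((r' p).1 : A) = S.lam p.1 p.2 := fun p => by rw [(hr' p).1, S.rmap_eq]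
  have hτ : ∀ p : X × X, ((r' p).2 : A) = S.tau p.2 p.1 := fun p => by rw [(hr' p).2, S.rmap_eq]
  refine ⟨?_, ?_, fun a => ?_, fun b => ?_⟩
  · refine Function.bijective_of_semiconj (Subtype.val_injective.prodMap Subtype.val_injective)
      (fun p => Prod.ext (hr' p).1 (hr' p).2) S.rmap_injective fun q => ?_
    obtain ⟨a, ha, b, hb, hab⟩ := hX.exists_rmap_eq q.1.2 q.2.2
    exact ⟨(⟨a, ha⟩, ⟨b, hb⟩), hab⟩
  · funext ⟨x, y, z⟩
    refine Prod.ext (Subtype.ext ?_) (Prod.ext (Subtype.ext ?_) (Subtype.ext ?_)) <;>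
      simp only [Function.comp_apply, hσ, hτ]
    exacts [S.ybe_fst x y z, S.ybe_snd x y z, S.ybe_thd x y z]
  · exact Function.bijective_of_semiconj Subtype.val_injective (fun b => hσ (a, b))
      (Function.LeftInverse.injective (S.lam_circInv_lam a))
      fun c => ⟨⟨_, hX.lam_mem c.2 (S.circInv a)⟩, S.lam_lam_circInv a c⟩
  · refine Function.bijective_of_semiconj Subtype.val_injective (fun a => hτ (a, b))
      (S.tau_injective b) fun v => ?_
    obtain ⟨a, ha, hav⟩ := hX.exists_tau_eq b v.2
    exact ⟨⟨a, ha⟩, hav⟩
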